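/- Under the same hypotheses as the semi-discrete entropy balance theorem for the hyper-reduced reduced order model with weakly imposed boundary conditions (W diagonal positive; V̄_N, V_b, V̄_h; Q̄ with Q̄𝟙 = 0, Q̄ + Q̄ᵀ = EᵀB_bE, E𝟙 = 𝟙; hybridized operator Q̄_h; S differentiable with bijective gradient v, potential ψ, entropy conservative flux f_EC; u_N solving the hyper-reduced ODE with entropy-projected states ũ, ṽ_b, ũ_b and boundary fluxes f*_b), suppose additionally that the boundary condition imposition is entropy stable, i.e. for all t, Σ_{j=1}^{b} (B_b)_{jj} ( ψ(ũ_{b,j}(t)) − ⟨ṽ_{b,j}(t), f*_{b,j}(t)⟩ ) ≤ 0. Then the discrete total entropy is non-increasing: for all t, (d/dt) Σ_{i=1}^{s} W_{ii} S( (V̄_N u_N(t))_i ) ≤ 0. -/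

import Mathlib

open Matrix
open scoped RealInnerProductSpace

/-- Action of a real matrix on a vector whose entries lie in a real vector space
(the "vector-of-vectors" matrix-vector product). -/
noncomputable def mulVecE {m' n' : Type*} [Fintype n'] {E : Type*}
    [AddCommMonoid E] [Module ℝ E] (A : Matrix m' n' ℝ) (x : n' → E) : m' → E :=
  fun i => ∑ j, A i j • x j

lemma mulVecE_mulVecE {m' n' p' : Type*} [Fintype n'] [Fintype p'] {E : Type*}
    [AddCommMonoid E] [Module ℝ E] (A : Matrix m' n' ℝ) (B : Matrix n' p' ℝ) (x : p' → E) :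
    mulVecE A (mulVecE B x) = mulVecE (A * B) x := by
  funext i
  simp only [mulVecE, Finset.smul_sum, smul_smul, Matrix.mul_apply, Finset.sum_smul]
  exact Finset.sum_comm

lemma sum_inner_mulVecE {m' n' : Type*} [Fintype m'] [Fintype n'] {k : ℕ}
    (A : Matrix m' n' ℝ) (x : n' → EuclideanSpace ℝ (Fin k)) (y : m' → EuclideanSpace ℝ (Fin k)) :
    ∑ i, ⟪mulVecE A x i, y i⟫ = ∑ j, ⟪x j, mulVecE Aᵀ y j⟫ := by
  simp only [mulVecE, sum_inner, inner_sum, real_inner_smul_left, real_inner_smul_right,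
    Matrix.transpose_apply]
  exact Finset.sum_comm

lemma hasDerivAt_mulVecE {m' n' : Type*} [Fintype n'] {k : ℕ}
    (A : Matrix m' n' ℝ) (u u' : ℝ → n' → EuclideanSpace ℝ (Fin k))
    (hu : ∀ j t, HasDerivAt (fun τ => u τ j) (u' t j) t) (t : ℝ) (i : m') :
    HasDerivAt (fun τ => mulVecE A (u τ) i) (mulVecE A (u' t) i) t := by
  unfold mulVecE
  exact HasDerivAt.fun_sum fun j _ => (hu j t).const_smul (A i j)

lemma skew_double_sum {ι : Type*} [Fintype ι] {k : ℕ}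
    (S' : Matrix ι ι ℝ) (hskew : ∀ i j, S' j i = -S' i j)
    (w : ι → EuclideanSpace ℝ (Fin k)) (Fm : ι → ι → EuclideanSpace ℝ (Fin k))
    (hFs : ∀ i j, Fm j i = Fm i j) (φ : ι → ℝ)
    (hpot : ∀ i j, ⟪w i - w j, Fm i j⟫ = φ i - φ j) :
    ∑ i, ∑ j, S' i j * ⟪w i, Fm i j⟫ = ∑ i, φ i * (∑ j, S' i j) := by
  have hT2 : ∑ i, ∑ j, S' i j * ⟪w i, Fm i j⟫
      = ∑ i, ∑ j, (-(S' i j)) * ⟪w j, Fm i j⟫ := by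
    rw [Finset.sum_comm]
    refine Finset.sum_congr rfl fun i _ => Finset.sum_congr rfl fun j _ => ?_
    rw [hskew, hFs]
  have h2 : (2:ℝ) * (∑ i, ∑ j, S' i j * ⟪w i, Fm i j⟫)
      = ∑ i, ∑ j, S' i j * (φ i - φ j) := by
    rw [two_mul]
    nth_rewrite 2 [hT2]
    rw [← Finset.sum_add_distrib]
    refine Finset.sum_congr rfl fun i _ => ?_
    rw [← Finset.sum_add_distrib]
    refine Finset.sum_congr rfl fun j _ => ?_
    rw [← hpot i j, inner_sub_left]
    ring
  have h3 : ∑ i, ∑ j, S' i j * (φ i - φ j)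
      = 2 * (∑ i, φ i * (∑ j, S' i j)) := by
    have hsplit : ∀ i j, S' i j * (φ i - φ j) = S' i j * φ i - S' i j * φ j := by
      intro i j; ring
    simp only [hsplit, Finset.sum_sub_distrib]
    have hb : ∑ i, ∑ j, S' i j * φ j = -∑ i, φ i * (∑ j, S' i j) := by
      rw [Finset.sum_comm, ← Finset.sum_neg_distrib]
      refine Finset.sum_congr rfl fun j _ => ?_
      rw [Finset.mul_sum, ← Finset.sum_neg_distrib]
      refine Finset.sum_congr rfl fun i _ => ?_
      rw [hskew]; ring
    have ha : ∑ i, ∑ j, S' i j * φ i = ∑ i, φ i * (∑ j, S' i j) := by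
      refine Finset.sum_congr rfl fun i _ => ?_
      rw [Finset.mul_sum]
      exact Finset.sum_congr rfl fun j _ => by ring
    rw [ha, hb]; ring
  linarith [h2, h3]

/-- Entropy stability of the hyper-reduced ROM with weakly imposed boundary
conditions: if the boundary condition imposition is entropy stable, the discrete
total entropy is non-increasing. -/
theorem stmt12 (n N s b : ℕ)
    (W : Fin s → ℝ) (hW : ∀ i, 0 < W i)
    (VN : Matrix (Fin s) (Fin N) ℝ)
    (hMN : IsUnit (VNᵀ * Matrix.diagonal W * VN))
    (Vb : Matrix (Fin b) (Fin N) ℝ)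
    (Vh : Matrix (Fin s ⊕ Fin b) (Fin N) ℝ)
    (hVh : Vh = Matrix.fromRows VN Vb)
    (Qbar : Matrix (Fin s) (Fin s) ℝ)
    (E : Matrix (Fin b) (Fin s) ℝ)
    (β : Fin b → ℝ)
    (hQ1 : Qbar *ᵥ (fun _ => (1 : ℝ)) = 0)
    (hSBP : Qbar + Qbarᵀ = Eᵀ * Matrix.diagonal β * E)
    (hE1 : E *ᵥ (fun _ => (1 : ℝ)) = fun _ => (1 : ℝ))
    (Qh : Matrix (Fin s ⊕ Fin b) (Fin s ⊕ Fin b) ℝ)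
    (hQh : Qh = (1 / 2 : ℝ) • Matrix.fromBlocks
      (Qbar - Qbarᵀ) (Eᵀ * Matrix.diagonal β)
      (-(Matrix.diagonal β * E)) (Matrix.diagonal β))
    (S : EuclideanSpace ℝ (Fin n) → ℝ)
    (v uv : EuclideanSpace ℝ (Fin n) → EuclideanSpace ℝ (Fin n))
    (hS : ∀ x, HasGradientAt S (v x) x)
    (hleft : Function.LeftInverse uv v) (hright : Function.RightInverse uv v)
    (ψ : EuclideanSpace ℝ (Fin n) → ℝ)
    (fEC : EuclideanSpace ℝ (Fin n) → EuclideanSpace ℝ (Fin n) → EuclideanSpace ℝ (Fin n))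
    (hsymm : ∀ uL uR, fEC uL uR = fEC uR uL)
    (hEC : ∀ uL uR, ⟪v uL - v uR, fEC uL uR⟫ = ψ uL - ψ uR)
    (uN uN' : ℝ → Fin N → EuclideanSpace ℝ (Fin n))
    (huN : ∀ k t, HasDerivAt (fun τ => uN τ k) (uN' t k) t)
    (fb : ℝ → Fin b → EuclideanSpace ℝ (Fin n))
    -- projected entropy variable coefficients
    (vN : ℝ → Fin N → EuclideanSpace ℝ (Fin n))
    (hvN : ∀ t, vN t =
      mulVecE ((VNᵀ * Matrix.diagonal W * VN)⁻¹ * VNᵀ * Matrix.diagonal W)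
        (fun i => v (mulVecE VN (uN t) i)))
    -- entropy-projected entropy variables and states
    (vtil : ℝ → (Fin s ⊕ Fin b) → EuclideanSpace ℝ (Fin n))
    (hvtil : ∀ t, vtil t = mulVecE Vh (vN t))
    (vtilb : ℝ → Fin b → EuclideanSpace ℝ (Fin n))
    (hvtilb : ∀ t, vtilb t = mulVecE Vb (vN t))
    (util : ℝ → (Fin s ⊕ Fin b) → EuclideanSpace ℝ (Fin n))
    (hutil : ∀ t i, util t i = uv (vtil t i))
    (utilb : ℝ → Fin b → EuclideanSpace ℝ (Fin n))
    (hutilb : ∀ t j, utilb t j = uv (vtilb t j))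
    -- flux matrix
    (F : ℝ → (Fin s ⊕ Fin b) → (Fin s ⊕ Fin b) → EuclideanSpace ℝ (Fin n))
    (hF : ∀ t i j, F t i j = fEC (util t i) (util t j))
    -- the hyper-reduced ROM with weakly imposed boundary conditions
    (hODE : ∀ t k,
      mulVecE (VNᵀ * Matrix.diagonal W * VN) (uN' t) k
        + mulVecE Vhᵀ (fun i => ∑ j, (Qh - Qhᵀ) i j • F t i j) k
        + mulVecE Vbᵀ (fun j => β j • fb t j) k = 0)
    -- entropy stable boundary condition imposition
    (hstab : ∀ t, ∑ j, β j * (ψ (utilb t j) - ⟪vtilb t j, fb t j⟫) ≤ 0) :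
    ∀ t, deriv (fun τ => ∑ i, W i * S (mulVecE VN (uN τ) i)) t ≤ 0 := by
  intro t
  -- Step 1: compute the derivative via the chain rule.
  have hD : HasDerivAt (fun τ => ∑ i, W i * S (mulVecE VN (uN τ) i))
      (∑ i, W i * ⟪v (mulVecE VN (uN t) i), mulVecE VN (uN' t) i⟫) t := by
    refine HasDerivAt.fun_sum fun i _ => ?_
    have hc := hasDerivAt_mulVecE VN uN uN' huN t i
    have hg := ((hS (mulVecE VN (uN t) i)).hasFDerivAt.comp_hasDerivAt t hc).const_mul (W i)
    simpa [Function.comp, InnerProductSpace.toDual_apply_apply] using hg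
  rw [hD.deriv]
  -- notation
  set M : Matrix (Fin N) (Fin N) ℝ := VNᵀ * Matrix.diagonal W * VN with hMdef
  -- basic scalar facts about row sums
  have hQ1' : ∀ a, ∑ j, Qbar a j = 0 := by
    intro a
    have h := congrFun hQ1 a
    simpa [Matrix.mulVec, dotProduct] using h
  have hE1' : ∀ c, ∑ j, E c j = 1 := by
    intro c
    have h := congrFun hE1 c
    simpa [Matrix.mulVec, dotProduct] using h
  have hQT : ∀ a, ∑ j, Qbar j a = ∑ c, β c * E c a := by
    intro a
    have hEv : (Eᵀ * Matrix.diagonal β * E) *ᵥ (fun _ => (1:ℝ)) = Eᵀ *ᵥ β := by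
      have hdiag : (Matrix.diagonal β *ᵥ (fun _ => (1:ℝ))) = β := by
        funext c; rw [Matrix.mulVec_diagonal]; ring
      rw [← Matrix.mulVec_mulVec, hE1, ← Matrix.mulVec_mulVec, hdiag]
    have h : Qbar *ᵥ (fun _ => (1:ℝ)) + Qbarᵀ *ᵥ (fun _ => (1:ℝ)) = Eᵀ *ᵥ β := by
      rw [← Matrix.add_mulVec, hSBP, hEv]
    rw [hQ1] at h
    have h2 := congrFun h a
    simpa [Matrix.mulVec, dotProduct, mul_comm] using h2
  -- row sums of the skew part of Qh
  have hrow : ∀ i', ∑ j, (Qh - Qhᵀ) i' j = Sum.elim (fun _ => (0:ℝ)) (fun c => -β c) i' := by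
    intro i'
    have hent : ∀ i j, (Qh - Qhᵀ) i j = Qh i j - Qh j i := by
      intro i j; simp [Matrix.sub_apply]
    rcases i' with a | c
    · rw [Fintype.sum_sum_type]
      simp only [hent, hQh, Matrix.smul_apply, smul_eq_mul, Matrix.fromBlocks_apply₁₁,
        Matrix.fromBlocks_apply₁₂, Matrix.fromBlocks_apply₂₁, Matrix.sub_apply,
        Matrix.transpose_apply, Matrix.neg_apply, Matrix.mul_diagonal, Matrix.diagonal_mul]
      have e1 : ∀ j, (1/2 : ℝ) * (Qbar a j - Qbar j a) - 1/2 * (Qbar j a - Qbar a j)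
          = Qbar a j - Qbar j a := fun j => by ring
      have e2 : ∀ j, (1/2 : ℝ) * (E j a * β j) - 1/2 * (-(β j * E j a)) = β j * E j a :=
        fun j => by ring
      simp only [e1, e2, Finset.sum_sub_distrib]
      rw [hQ1' a, hQT a]
      simp
    · rw [Fintype.sum_sum_type]
      simp only [hent, hQh, Matrix.smul_apply, smul_eq_mul, Matrix.fromBlocks_apply₂₁,
        Matrix.fromBlocks_apply₁₂, Matrix.fromBlocks_apply₂₂, Matrix.sub_apply,
        Matrix.transpose_apply, Matrix.neg_apply, Matrix.mul_diagonal, Matrix.diagonal_mul]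
      have e1 : ∀ j, (1/2 : ℝ) * -(β c * E c j) - 1/2 * (E c j * β c) = -(β c * E c j) :=
        fun j => by ring
      have e2 : ∀ j, (1/2 : ℝ) * (Matrix.diagonal β c j) - 1/2 * (Matrix.diagonal β j c)
          = 0 := by
        intro j
        rcases eq_or_ne c j with h | h
        · subst h; ring
        · rw [Matrix.diagonal_apply_ne _ h, Matrix.diagonal_apply_ne _ (Ne.symm h)]; ring
      simp only [e1, e2, Finset.sum_const_zero, add_zero, Finset.sum_neg_distrib,
        ← Finset.mul_sum]
      rw [hE1' c]
      simp
  -- projected entropy variables coincide with entropy variables of projected states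
  have hvw : ∀ i, v (util t i) = vtil t i := by
    intro i; rw [hutil]; exact hright _
  have hvwb : ∀ c, v (utilb t c) = vtilb t c := by
    intro c; rw [hutilb]; exact hright _
  have hvtilb_eq : ∀ c, vtil t (Sum.inr c) = vtilb t c := by
    intro c
    rw [hvtil, hvtilb, hVh]
    simp [mulVecE, Matrix.fromRows_apply_inr]
  have hutilb_eq : ∀ c, util t (Sum.inr c) = utilb t c := by
    intro c
    rw [hutil, hutilb, hvtilb_eq]
  -- the algebraic identity for the entropy production
  have hMinv : M * (M⁻¹ * VNᵀ * Matrix.diagonal W) = VNᵀ * Matrix.diagonal W := by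
    rw [← Matrix.mul_assoc, ← Matrix.mul_assoc,
      Matrix.mul_nonsing_inv _ ((Matrix.isUnit_iff_isUnit_det _).mp hMN), Matrix.one_mul]
  have hMsym : Mᵀ = M := by
    rw [hMdef, Matrix.transpose_mul, Matrix.transpose_mul, Matrix.transpose_transpose,
      Matrix.diagonal_transpose, Matrix.mul_assoc]
  have hDrow : ∀ i, mulVecE (Matrix.diagonal W * VN) (uN' t) i
      = W i • mulVecE VN (uN' t) i := by
    intro i
    simp only [mulVecE, Matrix.diagonal_mul, Finset.smul_sum]
    exact Finset.sum_congr rfl fun x _ => (smul_smul (W i) (VN i x) _).symm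
  have hproj : mulVecE ((Matrix.diagonal W * VN)ᵀ) (fun i => v (mulVecE VN (uN t) i))
      = mulVecE M (vN t) := by
    calc mulVecE ((Matrix.diagonal W * VN)ᵀ) (fun i => v (mulVecE VN (uN t) i))
        = mulVecE (VNᵀ * Matrix.diagonal W) (fun i => v (mulVecE VN (uN t) i)) := by
          rw [Matrix.transpose_mul, Matrix.diagonal_transpose]
      _ = mulVecE (M * (M⁻¹ * VNᵀ * Matrix.diagonal W)) (fun i => v (mulVecE VN (uN t) i)) := by
          rw [hMinv]
      _ = mulVecE M (vN t) := by rw [hvN t, mulVecE_mulVecE]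
  have hODE' : ∀ k, mulVecE M (uN' t) k
      = -(mulVecE Vhᵀ (fun i => ∑ j, (Qh - Qhᵀ) i j • F t i j) k
          + mulVecE Vbᵀ (fun j => β j • fb t j) k) := by
    intro k
    have h := hODE t k
    rw [add_assoc] at h
    exact eq_neg_of_add_eq_zero_left h
  -- chain of equalities
  have step1 : ∑ i, W i * ⟪v (mulVecE VN (uN t) i), mulVecE VN (uN' t) i⟫
      = ∑ j, ⟪vN t j, mulVecE M (uN' t) j⟫ := by
    calc ∑ i, W i * ⟪v (mulVecE VN (uN t) i), mulVecE VN (uN' t) i⟫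
        = ∑ i, ⟪mulVecE (Matrix.diagonal W * VN) (uN' t) i, v (mulVecE VN (uN t) i)⟫ := by
          refine Finset.sum_congr rfl fun i _ => ?_
          rw [hDrow i, real_inner_smul_left, real_inner_comm]
      _ = ∑ k, ⟪uN' t k, mulVecE ((Matrix.diagonal W * VN)ᵀ)
            (fun i => v (mulVecE VN (uN t) i)) k⟫ :=
          sum_inner_mulVecE _ _ _
      _ = ∑ k, ⟪mulVecE M (vN t) k, uN' t k⟫ := by
          rw [hproj]
          exact Finset.sum_congr rfl fun k _ => real_inner_comm _ _
      _ = ∑ j, ⟪vN t j, mulVecE Mᵀ (uN' t) j⟫ := sum_inner_mulVecE _ _ _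
      _ = ∑ j, ⟪vN t j, mulVecE M (uN' t) j⟫ := by rw [hMsym]
  have step2 : ∑ j, ⟪vN t j, mulVecE M (uN' t) j⟫
      = -(∑ i, ⟪vtil t i, ∑ j, (Qh - Qhᵀ) i j • F t i j⟫)
        - ∑ c, β c * ⟪vtilb t c, fb t c⟫ := by
    have hVhterm : ∑ k, ⟪vN t k, mulVecE Vhᵀ (fun i => ∑ j, (Qh - Qhᵀ) i j • F t i j) k⟫
        = ∑ i, ⟪vtil t i, ∑ j, (Qh - Qhᵀ) i j • F t i j⟫ := by
      rw [← sum_inner_mulVecE Vh (vN t) _]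
      refine Finset.sum_congr rfl fun i _ => ?_
      rw [hvtil t]
    have hVbterm : ∑ k, ⟪vN t k, mulVecE Vbᵀ (fun j => β j • fb t j) k⟫
        = ∑ c, β c * ⟪vtilb t c, fb t c⟫ := by
      rw [← sum_inner_mulVecE Vb (vN t) _]
      refine Finset.sum_congr rfl fun c _ => ?_
      rw [hvtilb t, real_inner_smul_right]
    calc ∑ j, ⟪vN t j, mulVecE M (uN' t) j⟫
        = ∑ k, (-(⟪vN t k, mulVecE Vhᵀ (fun i => ∑ j, (Qh - Qhᵀ) i j • F t i j) k⟫
            + ⟪vN t k, mulVecE Vbᵀ (fun j => β j • fb t j) k⟫)) := by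
          refine Finset.sum_congr rfl fun k _ => ?_
          rw [hODE' k, inner_neg_right, inner_add_right]
      _ = -(∑ k, ⟪vN t k, mulVecE Vhᵀ (fun i => ∑ j, (Qh - Qhᵀ) i j • F t i j) k⟫)
          - ∑ k, ⟪vN t k, mulVecE Vbᵀ (fun j => β j • fb t j) k⟫ := by
          simp only [neg_add, Finset.sum_add_distrib, Finset.sum_neg_distrib]
          ring
      _ = -(∑ i, ⟪vtil t i, ∑ j, (Qh - Qhᵀ) i j • F t i j⟫)
          - ∑ c, β c * ⟪vtilb t c, fb t c⟫ := by rw [hVhterm, hVbterm]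
  -- the volume term
  have hvol : ∑ i, ⟪vtil t i, ∑ j, (Qh - Qhᵀ) i j • F t i j⟫
      = -∑ c, β c * ψ (utilb t c) := by
    have hexp : ∑ i, ⟪vtil t i, ∑ j, (Qh - Qhᵀ) i j • F t i j⟫
        = ∑ i, ∑ j, (Qh - Qhᵀ) i j * ⟪vtil t i, F t i j⟫ := by
      refine Finset.sum_congr rfl fun i _ => ?_
      rw [inner_sum]
      exact Finset.sum_congr rfl fun j _ => real_inner_smul_right _ _ _
    rw [hexp]
    have hskew : ∀ i j, (Qh - Qhᵀ) j i = -((Qh - Qhᵀ) i j) := by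
      intro i j; simp [Matrix.sub_apply]
    have hFs : ∀ i j, F t j i = F t i j := by
      intro i j; rw [hF, hF, hsymm]
    have hpot : ∀ i j, ⟪vtil t i - vtil t j, F t i j⟫ = ψ (util t i) - ψ (util t j) := by
      intro i j
      rw [← hvw i, ← hvw j, hF]
      exact hEC _ _
    rw [skew_double_sum (Qh - Qhᵀ) hskew (vtil t) (F t) hFs (fun i => ψ (util t i)) hpot]
    rw [Fintype.sum_sum_type]
    simp only [hrow, Sum.elim_inl, Sum.elim_inr, mul_zero, Finset.sum_const_zero, zero_add]
    rw [← Finset.sum_neg_distrib]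
    refine Finset.sum_congr rfl fun c _ => ?_
    rw [hutilb_eq c]
    ring
  rw [step1, step2, hvol]
  have hfinal : -(-∑ c, β c * ψ (utilb t c)) - ∑ c, β c * ⟪vtilb t c, fb t c⟫
      = ∑ c, β c * (ψ (utilb t c) - ⟪vtilb t c, fb t c⟫) := by
    rw [neg_neg, ← Finset.sum_sub_distrib]
    refine Finset.sum_congr rfl fun c _ => ?_
    ring
  rw [hfinal]
  exact hstab t
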